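/- arXiv:2303.07285 — 10 statements merged into one kernel-verified Lean document; each statement's English description precedes it below -/
import Mathlib

section
/- Let v : [0,1] → ℝ be a twice continuously differentiable function, let r, c > 0, and suppose v satisfies the ODE 2·r²·c·(v(x) − x) = (max(v''(x),0))² on [0, x̄) for some x̄ ∈ (0,1], with v(x) > x and v''(x) > 0 on [0, x̄). If in addition 0 ≤ v'(x) ≤ 1 on [0, x̄), then the function a(x) := v''(x)/(r·c) is strictly decreasing on [0, x̄). -/
/-!
Since `v'' > 0`, `v'` is strictly increasing on `[0, x̄)`; as it is bounded by `1` and every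
point of `[0, x̄)` has points of `[0, x̄)` to its right, in fact `v' < 1` there. Hence
`v(x) - x` is strictly decreasing, and by the ODE so is `v''(x) = √(2 r² c (v(x) - x))`.
-/

open Set

theorem StrictMonoOn.forall_lt_of_forall_le_Ico {α β : Type*} [LinearOrder α] [DenselyOrdered α]
    [Preorder β] {f : α → β} {a b : α} {M : β} (hf : StrictMonoOn f (Ico a b))
    (hM : ∀ x ∈ Ico a b, f x ≤ M) : ∀ x ∈ Ico a b, f x < M := by
  intro x hx
  obtain ⟨w, hxw, hwb⟩ := exists_between hx.2
  have hw : w ∈ Ico a b := ⟨hx.1.trans hxw.le, hwb⟩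
  exact (hf hx hw hxw).trans_le (hM w hw)

theorem strictAntiOn_sub_id_of_deriv_lt_one {v : ℝ → ℝ} {s : Set ℝ} (hs : Convex ℝ s)
    (hv : Differentiable ℝ v) (h : ∀ x ∈ interior s, deriv v x < 1) :
    StrictAntiOn (fun x => v x - x) s := by
  refine strictAntiOn_of_deriv_neg hs (hv.sub differentiable_id).continuous.continuousOn ?_
  intro x hx
  rw [deriv_fun_sub (hv x) differentiableAt_fun_id, deriv_id'']
  linarith [h x hx]

theorem StrictAntiOn.of_mul_eq_sq {α : Type*} [Preorder α] {f g : α → ℝ} {s : Set α} {k : ℝ}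
    (hk : 0 < k) (hf : ∀ x ∈ s, 0 ≤ f x) (hfg : ∀ x ∈ s, k * g x = f x ^ 2)
    (hg : StrictAntiOn g s) : StrictAntiOn f s := by
  intro x hx y hy hxy
  refine lt_of_pow_lt_pow_left₀ 2 (hf x hx) ?_
  rw [← hfg x hx, ← hfg y hy]
  exact mul_lt_mul_of_pos_left (hg hx hy hxy) hk

theorem stmt0_general (v : ℝ → ℝ) (r c xbar : ℝ)
    (hr : 0 < r) (hc : 0 < c)
    (hv : ContDiff ℝ 2 v)
    (hode : ∀ x ∈ Ico (0:ℝ) xbar,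
      2 * r^2 * c * (v x - x) = (max (deriv (deriv v) x) 0)^2)
    (h2pos : ∀ x ∈ Ico (0:ℝ) xbar, 0 < deriv (deriv v) x)
    (hd : ∀ x ∈ Ico (0:ℝ) xbar, 0 ≤ deriv v x ∧ deriv v x ≤ 1) :
    StrictAntiOn (fun x => deriv (deriv v) x / (r * c)) (Ico (0:ℝ) xbar) := by
  have hv'_mono : StrictMonoOn (deriv v) (Ico 0 xbar) :=
    strictMonoOn_of_deriv_pos (convex_Ico 0 xbar)
      (hv.continuous_deriv (by norm_num)).continuousOn
      (fun x hx => h2pos x (interior_subset hx))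
  have hv'_lt : ∀ x ∈ Ico 0 xbar, deriv v x < 1 :=
    hv'_mono.forall_lt_of_forall_le_Ico (fun x hx => (hd x hx).2)
  have hgap : StrictAntiOn (fun x => v x - x) (Ico 0 xbar) :=
    strictAntiOn_sub_id_of_deriv_lt_one (convex_Ico 0 xbar) (hv.differentiable (by norm_num))
      (fun x hx => hv'_lt x (interior_subset hx))
  have hv''_anti : StrictAntiOn (deriv (deriv v)) (Ico 0 xbar) := by
    refine hgap.of_mul_eq_sq (k := 2 * r ^ 2 * c) (by positivity) (fun x hx => (h2pos x hx).le) fun x hx => ?_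
    rw [hode x hx, max_eq_left (h2pos x hx).le]
  intro x hx y hy hxy
  exact div_lt_div_of_pos_right (hv''_anti hx hy hxy) (by positivity)

/-- In the inactive benchmark, the optimal control a(x) = v''(x)/(rc) is
strictly decreasing on the active region. -/
theorem stmt0 (v : ℝ → ℝ) (r c xbar : ℝ)
    (hr : 0 < r) (hc : 0 < c) (hxbar : xbar ∈ Ioc (0:ℝ) 1)
    (hv : ContDiff ℝ 2 v)
    (hode : ∀ x ∈ Ico (0:ℝ) xbar,
      2 * r^2 * c * (v x - x) = (max (deriv (deriv v) x) 0)^2)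
    (hgt : ∀ x ∈ Ico (0:ℝ) xbar, v x > x)
    (h2pos : ∀ x ∈ Ico (0:ℝ) xbar, 0 < deriv (deriv v) x)
    (hd : ∀ x ∈ Ico (0:ℝ) xbar, 0 ≤ deriv v x ∧ deriv v x ≤ 1) :
    StrictAntiOn (fun x => deriv (deriv v) x / (r * c)) (Ico (0:ℝ) xbar) :=
  stmt0_general v r c xbar hr hc hv hode h2pos hd
end

section
/- Let v : [0,1] → ℝ be twice differentiable, r, c > 0, and b : [0,1] → ℝ nonnegative and non-decreasing. Suppose v satisfies r·(v(x) − x) = b(x)·v''(x) + (1/(2rc))·(max(v''(x),0))² for all x in an interval [0, x̲], that v'' ≥ 0 on [0, x̲], and that 0 ≤ v'(z) ≤ 1 for all z ∈ [0, x̲]. Then v'' is non-increasing on [0, x̲]. -/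
open Set

/-- If the opponent's strategy b is nonnegative and non-decreasing, the second
derivative of the value function (hence the optimal control) is non-increasing
on the convex region. -/
theorem stmt1 (v b : ℝ → ℝ) (r c xlow : ℝ)
    (hr : 0 < r) (hc : 0 < c)
    (hbnn : ∀ x ∈ Icc (0:ℝ) xlow, 0 ≤ b x)
    (hbmono : MonotoneOn b (Icc (0:ℝ) xlow))
    (hdiff : ∀ x ∈ Icc (0:ℝ) xlow,
      DifferentiableAt ℝ v x ∧ DifferentiableAt ℝ (deriv v) x)
    (hode : ∀ x ∈ Icc (0:ℝ) xlow,
      r * (v x - x) = b x * deriv (deriv v) x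
        + (1/(2*r*c)) * (max (deriv (deriv v) x) 0)^2)
    (h2nn : ∀ x ∈ Icc (0:ℝ) xlow, 0 ≤ deriv (deriv v) x)
    (hd : ∀ z ∈ Icc (0:ℝ) xlow, 0 ≤ deriv v z ∧ deriv v z ≤ 1) :
    AntitoneOn (deriv (deriv v)) (Icc (0:ℝ) xlow) := by
  intro y hy x hx hyx
  by_contra hcon
  push_neg at hcon
  set A := deriv (deriv v) x with hA
  set B := deriv (deriv v) y with hB
  -- y < x
  have hylt : y < x := lt_of_le_of_ne hyx (by rintro rfl; exact lt_irrefl _ hcon)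
  -- v x - v y ≤ x - y via MVT
  have hsub : Icc y x ⊆ Icc (0:ℝ) xlow := Icc_subset_Icc hy.1 hx.2
  have hcont : ContinuousOn v (Icc y x) := fun z hz =>
    ((hdiff z (hsub hz)).1.continuousAt).continuousWithinAt
  have hdiffOn : DifferentiableOn ℝ v (Ioo y x) := fun z hz =>
    ((hdiff z (hsub (Ioo_subset_Icc_self hz))).1).differentiableWithinAt
  obtain ⟨ξ, hξ, hξeq⟩ := exists_deriv_eq_slope v hylt hcont hdiffOn
  have hξmem : ξ ∈ Icc (0:ℝ) xlow := hsub (Ioo_subset_Icc_self hξ)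
  have hslope : v x - v y ≤ x - y := by
    have h1 : deriv v ξ ≤ 1 := (hd ξ hξmem).2
    rw [hξeq, div_le_one (by linarith)] at h1
    linarith
  -- ODE at x and y
  have hAnn : 0 ≤ A := h2nn x hx
  have hBnn : 0 ≤ B := h2nn y hy
  have hox := hode x hx
  have hoy := hode y hy
  rw [max_eq_left hAnn] at hox
  rw [max_eq_left hBnn] at hoy
  have hk : 0 < 1/(2*r*c) := by positivity
  have hbxy : b y ≤ b x := hbmono hy hx hyx
  have hbynn : 0 ≤ b y := hbnn y hy
  have hb1 : b y * B ≤ b x * A := by nlinarith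
  rw [← hA] at hox
  rw [← hB] at hoy
  have hsq : 1/(2*r*c) * B^2 < 1/(2*r*c) * A^2 := by
    have h2 : B^2 < A^2 := by nlinarith
    exact mul_lt_mul_of_pos_left h2 hk
  -- combine: r*(v x - v y) > r*(x - y)
  nlinarith [mul_le_mul_of_nonneg_left hslope hr.le]
end

section
/- Let v : [0, x̲] → ℝ with 0 < x̲ ≤ 1 be three times continuously differentiable on [0, x̲), r, c > 0, and suppose v''(x) = r·√(2c)·√(v(x) − x), v(x) > x, v''(x) > 0 on [0, x̲), v' < 1 on [0, x̲), and the left limit of v' at x̲ satisfies lim_{x↑x̲} v'(x) = L < 1. Then v'''(x) ≤ r²c·(L − 1)/v''(x) < 0 for x near x̲, and since v''(x) → 0 as x → x̲, we have lim_{x↑x̲} v'''(x) = −∞. -/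
open Set Filter Topology

/-!
Squaring the equation gives `(v'')² = 2r²c (v - x)`, and differentiating this identity gives
`v''' = r²c (v' - 1) / v''`. Since `v'' > 0`, `v'` increases towards its left limit `L`, so
`v' ≤ L` and `v''' ≤ r²c (L - 1) / v'' < 0`; this bound tends to `-∞` because `v'' ↓ 0`.
-/

theorem sq_eq_of_eq_mul_sqrt {y p z : ℝ} (h : y = p * √z) (hy : 0 < y) :
    y ^ 2 = p ^ 2 * z := by
  have hz : 0 ≤ z := by
    by_contra hz
    rw [Real.sqrt_eq_zero_of_nonpos (not_le.mp hz).le, mul_zero] at h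
    exact hy.ne' h
  rw [h, mul_pow, Real.sq_sqrt hz]

theorem deriv_three_eq_of_sq_deriv_two_eq {v : ℝ → ℝ} {U : Set ℝ} {k x : ℝ} (hU : IsOpen U)
    (hv : ContDiffOn ℝ 3 v U) (hsq : ∀ y ∈ U, deriv^[2] v y ^ 2 = 2 * k * (v y - y))
    (hx : x ∈ U) (hne : deriv^[2] v x ≠ 0) :
    deriv^[3] v x = k * (deriv v x - 1) / deriv^[2] v x := by
  have hxU : U ∈ 𝓝 x := hU.mem_nhds hx
  have hv' : HasDerivAt v (deriv v x) x :=
    ((hv.differentiableOn (by norm_num)).differentiableAt hxU).hasDerivAt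
  have hv'' : ContDiffOn ℝ 1 (deriv^[2] v) U :=
    (hv.deriv_of_isOpen hU (m := 2) (by norm_num)).deriv_of_isOpen hU (by norm_num)
  have hv''' : HasDerivAt (deriv^[2] v) (deriv^[3] v x) x :=
    ((hv''.differentiableOn one_ne_zero).differentiableAt hxU).hasDerivAt
  have hrhs : HasDerivAt (fun y ↦ 2 * k * (v y - y)) (2 * deriv^[2] v x * deriv^[3] v x) x := by
    refine (by simpa using hv'''.fun_pow 2 : HasDerivAt (fun y ↦ deriv^[2] v y ^ 2) _ x)
      |>.congr_of_eventuallyEq ?_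
    filter_upwards [hxU] with y hy using (hsq y hy).symm
  have h := hrhs.unique ((hv'.sub (hasDerivAt_id x)).const_mul (2 * k))
  rw [eq_div_iff hne]
  linear_combination h / 2

theorem monotoneOn_deriv_of_deriv_two_nonneg {v : ℝ → ℝ} {a b : ℝ}
    (hv : ContDiffOn ℝ 2 v (Ioo a b)) (h : ∀ x ∈ Ioo a b, 0 ≤ deriv^[2] v x) :
    MonotoneOn (deriv v) (Ioo a b) := by
  have hv' : ContDiffOn ℝ 1 (deriv v) (Ioo a b) := hv.deriv_of_isOpen isOpen_Ioo (by norm_num)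
  refine monotoneOn_of_deriv_nonneg (convex_Ioo a b) hv'.continuousOn
    ((hv'.differentiableOn one_ne_zero).mono interior_subset) fun x hx ↦ ?_
  exact h x (interior_subset hx)

theorem MonotoneOn.le_of_tendsto_nhdsLT {β : Type*} [TopologicalSpace β] [Preorder β]
    [OrderClosedTopology β] {f : ℝ → β} {a b : ℝ} {L : β} (hf : MonotoneOn f (Ioo a b))
    (hL : Tendsto f (𝓝[<] b) (𝓝 L)) {x : ℝ} (hx : x ∈ Ioo a b) : f x ≤ L :=
  ge_of_tendsto hL <| by
    filter_upwards [Ioo_mem_nhdsLT hx.2] with y hy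
    exact hf hx ⟨hx.1.trans hy.1, hy.2⟩ hy.1.le

theorem Filter.Tendsto.const_div_atBot_of_neg {𝕜 α : Type*} [Field 𝕜] [LinearOrder 𝕜]
    [IsStrictOrderedRing 𝕜] [TopologicalSpace 𝕜] [OrderTopology 𝕜] {l : Filter α} {g : α → 𝕜}
    {a : 𝕜} (hg : Tendsto g l (𝓝 0)) (hpos : ∀ᶠ x in l, 0 < g x) (ha : a < 0) :
    Tendsto (fun x ↦ a / g x) l atBot := by
  simpa only [div_eq_mul_inv, Pi.inv_apply] using
    (tendsto_nhdsWithin_of_tendsto_nhds_of_eventually_within _ hg hpos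
      |>.inv_tendsto_nhdsGT_zero).const_mul_atTop_of_neg ha

theorem stmt6_general (v : ℝ → ℝ) (r c xlow L : ℝ)
    (hr : 0 < r) (hc : 0 < c) (hxlow : xlow ∈ Ioc (0:ℝ) 1)
    (hv : ContDiffOn ℝ 3 v (Ico 0 xlow))
    (hode : ∀ x ∈ Ico (0:ℝ) xlow,
      deriv^[2] v x = r * Real.sqrt (2*c) * Real.sqrt (v x - x))
    (hpos : ∀ x ∈ Ico (0:ℝ) xlow, 0 < deriv^[2] v x)
    (hL : Tendsto (deriv v) (nhdsWithin xlow (Iio xlow)) (nhds L)) (hL1 : L < 1)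
    (h2to0 : Tendsto (deriv^[2] v) (nhdsWithin xlow (Iio xlow)) (nhds 0)) :
    (∀ᶠ x in nhdsWithin xlow (Iio xlow),
      deriv^[3] v x ≤ r^2*c*(L-1)/deriv^[2] v x ∧
      r^2*c*(L-1)/deriv^[2] v x < 0) ∧
    Tendsto (deriv^[3] v) (nhdsWithin xlow (Iio xlow)) atBot := by
  have hU : Ioo 0 xlow ∈ 𝓝[<] xlow := Ioo_mem_nhdsLT hxlow.1
  have hvU : ContDiffOn ℝ 3 v (Ioo 0 xlow) := hv.mono Ioo_subset_Ico_self
  have hposU : ∀ x ∈ Ioo 0 xlow, 0 < deriv^[2] v x := fun x hx ↦ hpos x (Ioo_subset_Ico_self hx)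
  have hk : 0 < r ^ 2 * c := by positivity
  have hnum : r ^ 2 * c * (L - 1) < 0 := mul_neg_of_pos_of_neg hk (by linarith)
  have hsq : ∀ x ∈ Ioo 0 xlow, deriv^[2] v x ^ 2 = 2 * (r ^ 2 * c) * (v x - x) := by
    intro x hx
    rw [sq_eq_of_eq_mul_sqrt (hode x (Ioo_subset_Ico_self hx)) (hposU x hx), mul_pow,
      Real.sq_sqrt (by positivity)]
    ring
  have hmono : MonotoneOn (deriv v) (Ioo 0 xlow) :=
    monotoneOn_deriv_of_deriv_two_nonneg (hvU.of_le (by norm_num)) fun x hx ↦ (hposU x hx).le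
  have hbound : ∀ᶠ x in 𝓝[<] xlow,
      deriv^[3] v x ≤ r^2*c*(L-1)/deriv^[2] v x ∧ r^2*c*(L-1)/deriv^[2] v x < 0 := by
    filter_upwards [hU] with x hx
    refine ⟨?_, div_neg_of_neg_of_pos hnum (hposU x hx)⟩
    rw [deriv_three_eq_of_sq_deriv_two_eq isOpen_Ioo hvU hsq hx (hposU x hx).ne']
    gcongr ?_ / _
    · exact (hposU x hx).le
    · exact mul_le_mul_of_nonneg_left (by linarith [hmono.le_of_tendsto_nhdsLT hL hx]) hk.le
  refine ⟨hbound, tendsto_atBot_mono' _ (hbound.mono fun _ h ↦ h.1) ?_⟩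
  exact h2to0.const_div_atBot_of_neg (eventually_of_mem hU hposU) hnum

/-- If the left limit of v' at the threshold is strictly below 1 and v'' → 0,
then v''' is bounded above by a negative quantity that blows down, so
v''' → −∞ at the threshold. -/
theorem stmt6 (v : ℝ → ℝ) (r c xlow L : ℝ)
    (hr : 0 < r) (hc : 0 < c) (hxlow : xlow ∈ Ioc (0:ℝ) 1)
    (hv : ContDiffOn ℝ 3 v (Ico 0 xlow))
    (hode : ∀ x ∈ Ico (0:ℝ) xlow,
      deriv^[2] v x = r * Real.sqrt (2*c) * Real.sqrt (v x - x))
    (hgt : ∀ x ∈ Ico (0:ℝ) xlow, v x > x)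
    (hpos : ∀ x ∈ Ico (0:ℝ) xlow, 0 < deriv^[2] v x)
    (hd1 : ∀ x ∈ Ico (0:ℝ) xlow, deriv v x < 1)
    (hL : Tendsto (deriv v) (nhdsWithin xlow (Iio xlow)) (nhds L)) (hL1 : L < 1)
    (h2to0 : Tendsto (deriv^[2] v) (nhdsWithin xlow (Iio xlow)) (nhds 0)) :
    (∀ᶠ x in nhdsWithin xlow (Iio xlow),
      deriv^[3] v x ≤ r^2*c*(L-1)/deriv^[2] v x ∧
      r^2*c*(L-1)/deriv^[2] v x < 0) ∧
    Tendsto (deriv^[3] v) (nhdsWithin xlow (Iio xlow)) atBot :=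
  stmt6_general v r c xlow L hr hc hxlow hv hode hpos hL hL1 h2to0
end

section
/- Let v : [0, x̲) → ℝ be smooth with v''(x) = r·√(2c)·√(v(x) − x), v(x) > x, v''(x) > 0, v' strictly increasing and strictly concave on [0, x̲), where 0 < x̲ < 1, and suppose v extends continuously with v(x̲) = x̲ and lim_{x↑x̲} v'(x) = 1. Then lim_{x↑x̲} v'''(x) = 0 and lim_{x↑x̲} v⁗(x) = (1/3)·r²·c > 0. -/
open Set Filter

/-- A function with zero derivative on an open interval is constant there. -/
lemma const_on_Ioo {E : ℝ → ℝ} {a b : ℝ}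
    (h : ∀ x ∈ Ioo a b, HasDerivAt E 0 x) :
    ∀ x ∈ Ioo a b, ∀ y ∈ Ioo a b, E x = E y := by
  have key : ∀ x ∈ Ioo a b, ∀ y ∈ Ioo a b, x ≤ y → E y = E x := by
    intro x hx y hy hxy
    have hsub : Icc x y ⊆ Ioo a b := fun z hz => ⟨lt_of_lt_of_le hx.1 hz.1, lt_of_le_of_lt hz.2 hy.2⟩
    have hc : ContinuousOn E (Icc x y) := fun z hz =>
      ((h z (hsub hz)).continuousAt).continuousWithinAt
    have hder : ∀ z ∈ Ico x y, HasDerivWithinAt E 0 (Ici z) z := fun z hz =>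
      (h z (hsub ⟨hz.1, le_of_lt hz.2⟩)).hasDerivWithinAt
    exact constant_of_has_deriv_right_zero hc hder y ⟨hxy, le_refl _⟩
  intro x hx y hy
  rcases le_total x y with hxy | hxy
  · exact (key x hx y hy hxy).symm
  · exact key y hy x hx hxy

/-- If v'(x̲⁻) = 1 at the threshold x̲ < 1, then v' → 0 and v⁗ → r²c/3 > 0
at the threshold (so the optimal control is convex near x̲). -/
theorem stmt7 (v : ℝ → ℝ) (r c xlow : ℝ)
    (hr : 0 < r) (hc : 0 < c) (hxlow : xlow ∈ Ioo (0:ℝ) 1)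
    (hv : ContDiffOn ℝ (⊤ : ℕ∞) v (Ico 0 xlow))
    (hode : ∀ x ∈ Ico (0:ℝ) xlow,
      deriv^[2] v x = r * Real.sqrt (2*c) * Real.sqrt (v x - x))
    (hgt : ∀ x ∈ Ico (0:ℝ) xlow, v x > x)
    (hpos : ∀ x ∈ Ico (0:ℝ) xlow, 0 < deriv^[2] v x)
    (hmono : StrictMonoOn (deriv v) (Ico 0 xlow))
    (hconc : StrictConcaveOn ℝ (Ico 0 xlow) (deriv v))
    (hext : Tendsto v (nhdsWithin xlow (Iio xlow)) (nhds xlow))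
    (hvxlow : v xlow = xlow)
    (hd1 : Tendsto (deriv v) (nhdsWithin xlow (Iio xlow)) (nhds 1)) :
    Tendsto (deriv^[3] v) (nhdsWithin xlow (Iio xlow)) (nhds 0) ∧
    Tendsto (deriv^[4] v) (nhdsWithin xlow (Iio xlow)) (nhds (r^2*c/3)) := by
  set K : ℝ := r * Real.sqrt (2*c) with hKdef
  have h2c : (0:ℝ) < 2*c := by linarith
  have hK : 0 < K := mul_pos hr (Real.sqrt_pos.2 h2c)
  have hK2 : K^2 = r^2*(2*c) := by
    rw [hKdef, mul_pow, Real.sq_sqrt h2c.le]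
  set U : Set ℝ := Ioo 0 xlow with hUdef
  have hUo : IsOpen U := isOpen_Ioo
  have hUsub : U ⊆ Ico 0 xlow := Ioo_subset_Ico_self
  have hvU : ContDiffOn ℝ (⊤ : ℕ∞) v U := hv.mono hUsub
  set F := nhdsWithin xlow (Iio xlow) with hFdef
  -- smoothness of iterated derivatives
  have hCk : ∀ k : ℕ, ContDiffOn ℝ (⊤ : ℕ∞) (deriv^[k] v) U := by
    intro k; induction k with
    | zero => exact hvU
    | succ n ih =>
      rw [Function.iterate_succ_apply']
      exact ih.deriv_of_isOpen hUo (by simp)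
  have hD : ∀ (k : ℕ), ∀ x ∈ U, HasDerivAt (deriv^[k] v) (deriv^[k+1] v x) x := by
    intro k x hx
    have h := (((hCk k).differentiableOn (by simp)).differentiableAt
      (hUo.mem_nhds hx)).hasDerivAt
    rw [Function.iterate_succ_apply']
    exact h
  have hwpos : ∀ x ∈ U, 0 < v x - x := fun x hx => sub_pos.2 (hgt x (hUsub hx))
  have hode' : ∀ x ∈ U, deriv^[2] v x = K * Real.sqrt (v x - x) :=
    fun x hx => hode x (hUsub hx)
  -- derivative of v - id and of sqrt(v - id)
  have hw' : ∀ x ∈ U, HasDerivAt (fun y => v y - y) (deriv v x - 1) x := by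
    intro x hx
    have h0 := hD 0 x hx
    simp only [Function.iterate_zero, Function.iterate_one, id_eq] at h0
    exact h0.sub (hasDerivAt_id x)
  have hsq : ∀ x ∈ U, HasDerivAt (fun y => Real.sqrt (v y - y))
      ((deriv v x - 1) / (2 * Real.sqrt (v x - x))) x := by
    intro x hx
    exact (hw' x hx).sqrt (ne_of_gt (hwpos x hx))
  -- formula for the third derivative
  have hd3 : ∀ x ∈ U, deriv^[3] v x = K * ((deriv v x - 1) / (2 * Real.sqrt (v x - x))) := by
    intro x hx
    have hev : deriv^[2] v =ᶠ[nhds x] fun y => K * Real.sqrt (v y - y) :=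
      eventually_of_mem (hUo.mem_nhds hx) hode'
    have h1 : deriv^[3] v x = deriv (deriv^[2] v) x := by
      rw [Function.iterate_succ_apply']
    rw [h1, hev.deriv_eq]
    exact ((hsq x hx).const_mul K).deriv
  -- first derivative of v
  have hd1' : ∀ x ∈ U, HasDerivAt (deriv v) (deriv^[2] v x) x := by
    intro x hx
    have h := hD 1 x hx
    simpa only [Function.iterate_one] using h
  -- the first integral E
  set E : ℝ → ℝ := fun y => 3*(deriv v y - 1)^2 - 4*K*((v y - y)*Real.sqrt (v y - y))
    with hEdef
  have hE' : ∀ x ∈ U, HasDerivAt E 0 x := by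
    intro x hx
    have h1 : HasDerivAt (fun y => 3*(deriv v y - 1)^2)
        (3*(2*(deriv v x - 1)^1 * deriv^[2] v x)) x :=
      (((hd1' x hx).sub_const 1).pow 2).const_mul 3
    have h2 : HasDerivAt (fun y => 4*K*((v y - y)*Real.sqrt (v y - y)))
        (4*K*((deriv v x - 1) * Real.sqrt (v x - x) +
          (v x - x) * ((deriv v x - 1) / (2 * Real.sqrt (v x - x))))) x :=
      ((hw' x hx).mul (hsq x hx)).const_mul (4*K)
    have h3 : HasDerivAt E _ x := h1.sub h2
    convert h3 using 1
    set s := Real.sqrt (v x - x) with hsdef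
    have hs : s * s = v x - x := Real.mul_self_sqrt (hwpos x hx).le
    have hsne : s ≠ 0 := ne_of_gt (Real.sqrt_pos.2 (hwpos x hx))
    rw [hode' x hx, ← hsdef, ← hs]
    field_simp
    ring
  -- E is constant on U
  have hEconst : ∀ x ∈ U, ∀ y ∈ U, E x = E y := const_on_Ioo hE'
  -- limits of basic quantities along F
  have hidF : Tendsto (fun x : ℝ => x) F (nhds xlow) :=
    tendsto_id.mono_left nhdsWithin_le_nhds
  have hw0 : Tendsto (fun x => v x - x) F (nhds 0) := by
    have := hext.sub hidF
    simpa using this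
  have hsq0 : Tendsto (fun x => Real.sqrt (v x - x)) F (nhds 0) := by
    have := (Real.continuous_sqrt.tendsto 0).comp hw0
    simpa [Function.comp_def, Real.sqrt_zero] using this
  have hE0 : Tendsto E F (nhds 0) := by
    have h1 : Tendsto (fun x => 3*(deriv v x - 1)^2) F (nhds (3*(1-1)^2)) :=
      ((hd1.sub tendsto_const_nhds).pow 2).const_mul 3
    have h2 : Tendsto (fun x => 4*K*((v x - x)*Real.sqrt (v x - x))) F (nhds (4*K*(0*0))) :=
      (hw0.mul hsq0).const_mul (4*K)
    have := h1.sub h2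
    simpa using this
  -- eventually in U
  have hUF : ∀ᶠ x in F, x ∈ U := by
    have h1 : Iio xlow ∈ F := self_mem_nhdsWithin
    have h2 : Ioi (0:ℝ) ∈ F := nhdsWithin_le_nhds (isOpen_Ioi.mem_nhds hxlow.1)
    filter_upwards [h1, h2] with x hx1 hx2
    exact ⟨hx2, hx1⟩
  -- E ≡ 0 on U
  have hx0 : xlow/2 ∈ U := ⟨by linarith [hxlow.1], by linarith [hxlow.1]⟩
  have hEx0 : E (xlow/2) = 0 := by
    have hEev : E =ᶠ[F] fun _ => E (xlow/2) := by
      filter_upwards [hUF] with x hx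
      exact hEconst x hx (xlow/2) hx0
    have hconst : Tendsto (fun _ : ℝ => E (xlow/2)) F (nhds 0) := hE0.congr' hEev
    exact tendsto_nhds_unique tendsto_const_nhds hconst
  have hEzero : ∀ x ∈ U, 3*(deriv v x - 1)^2 = 4*K*((v x - x)*Real.sqrt (v x - x)) := by
    intro x hx
    have h := (hEconst x hx (xlow/2) hx0).trans hEx0
    have h' : 3*(deriv v x - 1)^2 - 4*K*((v x - x)*Real.sqrt (v x - x)) = 0 := h
    linarith
  -- v' ≤ 1 on U
  have hle : ∀ x ∈ U, deriv v x ≤ 1 := by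
    intro x hx
    apply ge_of_tendsto hd1
    have h1 : Iio xlow ∈ F := self_mem_nhdsWithin
    have h2 : Ioi x ∈ F := nhdsWithin_le_nhds (isOpen_Ioi.mem_nhds hx.2)
    filter_upwards [h1, h2] with z hz1 hz2
    exact le_of_lt (hmono (hUsub hx) ⟨le_of_lt (lt_trans hx.1 hz2), hz1⟩ hz2)
  -- key identity : 3 (v''')² = K² v''
  have h3sq : ∀ x ∈ U, 3 * (deriv^[3] v x)^2 = K^2 * deriv^[2] v x := by
    intro x hx
    set s := Real.sqrt (v x - x) with hsdef
    have hs : s * s = v x - x := Real.mul_self_sqrt (hwpos x hx).le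
    have hsne : s ≠ 0 := ne_of_gt (Real.sqrt_pos.2 (hwpos x hx))
    have hid := hEzero x hx
    rw [← hsdef, ← hs] at hid
    rw [hd3 x hx, hode' x hx, ← hsdef]
    field_simp
    rw [hKdef] at hid
    linear_combination hid
  -- v''' is negative on U
  have hd3neg : ∀ x ∈ U, deriv^[3] v x < 0 := by
    intro x hx
    have hne : deriv^[3] v x ≠ 0 := by
      intro h0
      have := h3sq x hx
      rw [h0] at this
      have hp := hpos x (hUsub hx)
      nlinarith [sq_nonneg K, mul_pos (pow_pos hK 2) hp]
    have hle' : deriv^[3] v x ≤ 0 := by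
      rw [hd3 x hx]
      have h1 : deriv v x - 1 ≤ 0 := by linarith [hle x hx]
      have h2 : 0 < 2 * Real.sqrt (v x - x) := by
        exact mul_pos two_pos (Real.sqrt_pos.2 (hwpos x hx))
      exact mul_nonpos_of_nonneg_of_nonpos hK.le (div_nonpos_of_nonpos_of_nonneg h1 h2.le)
    exact lt_of_le_of_ne hle' hne
  -- third derivative tends to 0
  have hd2lim : Tendsto (deriv^[2] v) F (nhds 0) := by
    have h1 : Tendsto (fun x => K * Real.sqrt (v x - x)) F (nhds (K * 0)) :=
      hsq0.const_mul K
    have hev : (fun x => K * Real.sqrt (v x - x)) =ᶠ[F] deriv^[2] v := by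
      filter_upwards [hUF] with x hx
      exact (hode' x hx).symm
    simpa using h1.congr' hev
  have hd3eq : ∀ x ∈ U, deriv^[3] v x = -Real.sqrt (K^2 * deriv^[2] v x / 3) := by
    intro x hx
    have h1 : K^2 * deriv^[2] v x / 3 = (deriv^[3] v x)^2 := by
      linarith [h3sq x hx]
    rw [h1, Real.sqrt_sq_eq_abs, abs_of_neg (hd3neg x hx), neg_neg]
  have part1 : Tendsto (deriv^[3] v) F (nhds 0) := by
    have h1 : Tendsto (fun x => -Real.sqrt (K^2 * deriv^[2] v x / 3)) F
        (nhds (-Real.sqrt (K^2 * 0 / 3))) := by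
      exact (((Real.continuous_sqrt.tendsto _).comp
        ((hd2lim.const_mul (K^2)).div_const 3)).neg)
    have hev : (fun x => -Real.sqrt (K^2 * deriv^[2] v x / 3)) =ᶠ[F] deriv^[3] v := by
      filter_upwards [hUF] with x hx
      exact (hd3eq x hx).symm
    have := h1.congr' hev
    simpa using this
  -- fourth derivative
  have hd4 : ∀ x ∈ U, deriv^[4] v x = K^2/6 := by
    intro x hx
    have hL : HasDerivAt (fun y => 3*(deriv^[3] v y)^2)
        (3*(2*(deriv^[3] v x)^1 * deriv^[4] v x)) x :=
      ((hD 3 x hx).pow 2).const_mul 3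
    have hR : HasDerivAt (fun y => K^2 * deriv^[2] v y)
        (K^2 * deriv^[3] v x) x :=
      (hD 2 x hx).const_mul (K^2)
    have hev : (fun y => 3*(deriv^[3] v y)^2) =ᶠ[nhds x] (fun y => K^2 * deriv^[2] v y) :=
      eventually_of_mem (hUo.mem_nhds hx) (fun y hy => h3sq y hy)
    have hL' : HasDerivAt (fun y => K^2 * deriv^[2] v y)
        (3*(2*(deriv^[3] v x)^1 * deriv^[4] v x)) x :=
      hL.congr_of_eventuallyEq hev.symm
    have heq := hL'.unique hR
    have hne := ne_of_lt (hd3neg x hx)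
    have heq' : (6 * deriv^[4] v x) * deriv^[3] v x = K^2 * deriv^[3] v x := by
      linear_combination heq
    have h6 := mul_right_cancel₀ hne heq'
    linarith
  have hval : K^2/6 = r^2*c/3 := by
    rw [hK2]; ring
  have part2 : Tendsto (deriv^[4] v) F (nhds (r^2*c/3)) := by
    have hev : (fun _ : ℝ => r^2*c/3) =ᶠ[F] deriv^[4] v := by
      filter_upwards [hUF] with x hx
      rw [hd4 x hx, hval]
    exact (tendsto_const_nhds.congr' hev)
  exact ⟨part1, part2⟩
end

section
/- Let v : [0,1] → ℝ be continuous, and suppose v is twice differentiable on (0,1) except possibly at a single point x̄, where v has a concave kink (left derivative ≥ right derivative). Suppose r > 0, c > 0, b : [0,1] → ℝ₊ continuous with b ≡ 0 on [0, x̄], and v satisfies: r(v(x) − x) = (1/(2rc))(v''(x)₊)² on [0, x̄), and r(v(x) − x) = b(x)·v''(x) ≤ 0 on (x̄, 1] with v concave there. Then v satisfies r(v(x) − x) − (1/(2rc))(v''(x)₊)² ≤ 0 at every point of twice-differentiability in (0,1); i.e., v is a (classical, a.e.) subsolution of the inactive-benchmark HJB equation r(w − x) = (1/(2rc))(w''₊)².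 -/
open Set

/-- In equilibrium the player's value function is an (a.e. classical)
subsolution of the inactive-benchmark HJB equation. -/
theorem stmt10 (v b : ℝ → ℝ) (r c xbar : ℝ)
    (hr : 0 < r) (hc : 0 < c) (hxbar : xbar ∈ Ioo (0:ℝ) 1)
    (hvcont : ContinuousOn v (Icc 0 1))
    (hdiff : ∀ x ∈ Ioo (0:ℝ) 1, x ≠ xbar →
      DifferentiableAt ℝ v x ∧ DifferentiableAt ℝ (deriv v) x)
    (hkink : derivWithin v (Iio xbar) xbar ≥ derivWithin v (Ioi xbar) xbar)
    (hbcont : ContinuousOn b (Icc 0 1))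
    (hbnn : ∀ x ∈ Icc (0:ℝ) 1, 0 ≤ b x)
    (hb0 : ∀ x ∈ Icc (0:ℝ) xbar, b x = 0)
    (hode1 : ∀ x ∈ Ico (0:ℝ) xbar,
      r * (v x - x) = (1/(2*r*c)) * (max (deriv (deriv v) x) 0)^2)
    (hode2 : ∀ x ∈ Ioc xbar 1,
      r * (v x - x) = b x * deriv (deriv v) x ∧ r * (v x - x) ≤ 0)
    (hconc : ConcaveOn ℝ (Ioc xbar 1) v) :
    ∀ x ∈ Ioo (0:ℝ) 1, DifferentiableAt ℝ v x → DifferentiableAt ℝ (deriv v) x →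
      r * (v x - x) - (1/(2*r*c)) * (max (deriv (deriv v) x) 0)^2 ≤ 0 := by
  intro x hx _ _
  have hsq : 0 ≤ (1/(2*r*c)) * (max (deriv (deriv v) x) 0)^2 := by
    apply mul_nonneg
    · positivity
    · positivity
  rcases lt_trichotomy x xbar with h | h | h
  · have := hode1 x ⟨hx.1.le, h⟩
    linarith
  · -- x = xbar : use continuity from the right and hode2
    subst h
    have hle : r * (v x - x) ≤ 0 := by
      have hcw : ContinuousWithinAt (fun y => r * (v y - y)) (Ioc x 1) x := by
        have : ContinuousWithinAt v (Icc 0 1) x :=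
          hvcont x ⟨hx.1.le, hx.2.le⟩
        have hmono : Ioc x 1 ⊆ Icc (0:ℝ) 1 := fun y hy =>
          ⟨le_trans hx.1.le hy.1.le, hy.2⟩
        exact ((this.mono hmono).sub continuousWithinAt_id).const_smul r
      have hne : (nhdsWithin x (Ioc x 1)).NeBot := by
        have : x ∈ closure (Ioc x 1) := by
          rw [closure_Ioc (ne_of_lt hx.2)]
          exact ⟨le_refl x, hx.2.le⟩
        exact mem_closure_iff_nhdsWithin_neBot.mp this
      have hev : ∀ᶠ y in nhdsWithin x (Ioc x 1), r * (v y - y) ≤ 0 := by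
        filter_upwards [self_mem_nhdsWithin] with y hy
        exact (hode2 y hy).2
      have htend : Filter.Tendsto (fun y => r * (v y - y)) (nhdsWithin x (Ioc x 1))
          (nhds (r * (v x - x))) := hcw
      exact le_of_tendsto htend hev
    linarith
  · have := (hode2 x ⟨h, hx.2.le⟩).2
    linarith
end

section
/- Let v : [0,1] → ℝ be continuous with v(0) = 0, concave on [0,1], and suppose v is a viscosity supersolution of r·v(x) − r·x − (1/(2rc))·(max(M,0))² ≥ 0 on (0,1) in the sense that for every x₀ ∈ (0,1) and every C² function φ with a local minimum of v − φ at x₀, r·v(x₀) − r·x₀ − (1/(2rc))·(max(φ''(x₀),0))² ≥ 0. If there exists x' ∈ (0,1] with v(x') > 0, then a contradiction arises; and if v ≡ 0 a contradiction also arises (using the test point x = 1/2 with test function having second derivative −1). Hence no such v exists, i.e., any supersolution satisfies v(0) > 0. -/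
/-!
Touching `v` from below at an interior minimum of `v x - x + K (x - y)²` by a concave
quadratic shows, through the interior inequality, that `v x ≥ x` on `[0, 1]`; in particular
`v 0 ≥ 0`. If `v 0 = 0`, the convex quadratic `(x² + x) / 2 ≤ x ≤ v x` touches `v` at `0` with
positive slope and positive curvature, so both terms of the boundary inequality are negative.
-/

open Set Filter

theorem deriv_quadratic (a b c : ℝ) :
    deriv (fun x : ℝ => a * x ^ 2 + b * x + c) = fun x => 2 * a * x + b := by
  ext x
  exact ((((hasDerivAt_pow 2 x).const_mul a).add ((hasDerivAt_id x).const_mul b)).add_const c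
    |>.congr_deriv (by simp; ring)).deriv

theorem deriv_deriv_quadratic (a b c : ℝ) :
    deriv (deriv fun x : ℝ => a * x ^ 2 + b * x + c) = fun _ => 2 * a := by
  rw [deriv_quadratic]
  ext x
  simp

theorem exists_nonneg_lt_mul_lt_mul (A B : ℝ) {s t : ℝ} (hs : 0 < s) (ht : 0 < t) :
    ∃ K : ℝ, 0 ≤ K ∧ A < K * s ∧ B < K * t :=
  ((eventually_ge_atTop 0).and
    (((tendsto_id.atTop_mul_const hs).eventually_gt_atTop A).and
      ((tendsto_id.atTop_mul_const ht).eventually_gt_atTop B))).exists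

theorem self_le_of_concave_test {v : ℝ → ℝ} (hcont : ContinuousOn v (Icc 0 1))
    (htest : ∀ x₀ ∈ Ioo (0 : ℝ) 1, ∀ φ : ℝ → ℝ, ContDiff ℝ 2 φ → φ x₀ = v x₀ →
      (∀ x ∈ Icc (0 : ℝ) 1, φ x ≤ v x) → deriv (deriv φ) x₀ ≤ 0 → x₀ ≤ v x₀) :
    ∀ y ∈ Ioo (0 : ℝ) 1, y ≤ v y := by
  intro y hy
  by_contra! hvy
  -- `K` is large enough that `G y < G 0` and `G y < G 1`, so `G` has an interior minimum.
  obtain ⟨K, hK, hK0, hK1⟩ := exists_nonneg_lt_mul_lt_mul (v y - y - v 0) (v y - y - v 1 + 1)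
    (pow_pos hy.1 2) (pow_pos (sub_pos.2 hy.2) 2)
  set G : ℝ → ℝ := fun x => v x - x + K * (x - y) ^ 2
  have hGcont : ContinuousOn G (Icc 0 1) := (hcont.sub continuousOn_id).add (by fun_prop)
  have hGy : G y = v y - y := by simp [G]
  obtain ⟨x₀, hx₀, hmin⟩ := isCompact_Icc.exists_isMinOn_mem_subset (s := Ioo 0 1) hGcont
    (Ioo_subset_Icc_self hy) (by
      rw [Icc_sdiff_Ioo_same zero_le_one]
      rintro z (rfl | rfl) <;> simp only [G] <;> linarith)
  have hφ : ∀ x, -K * x ^ 2 + (1 + 2 * K * y) * x + (G x₀ - K * y ^ 2)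
      = x - K * (x - y) ^ 2 + G x₀ := fun x => by ring
  have hx₀v := htest x₀ hx₀ (fun x => -K * x ^ 2 + (1 + 2 * K * y) * x + (G x₀ - K * y ^ 2))
    (by fun_prop) (by rw [hφ]; simp only [G]; ring)
    (fun x hx => by have : G x₀ ≤ G x := hmin hx; simp only [hφ, G] at this ⊢; linarith)
    (by rw [deriv_deriv_quadratic]; linarith)
  have hGx₀ : G x₀ ≤ G y := hmin (Ioo_subset_Icc_self hy)
  have hvG : v x₀ - x₀ ≤ G x₀ := by simp only [G]; nlinarith
  linarith

theorem stmt11_general (v : ℝ → ℝ) (r c : ℝ)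
    (hr : 0 < r) (hc : 0 < c)
    (hcont : ContinuousOn v (Icc 0 1))
    (hint : ∀ x₀ ∈ Ioo (0:ℝ) 1, ∀ φ : ℝ → ℝ, ContDiff ℝ 2 φ → φ x₀ = v x₀ →
      (∀ x ∈ Icc (0:ℝ) 1, φ x ≤ v x) →
      0 ≤ r * v x₀ - r * x₀ - (1/(2*r*c)) * (max (deriv (deriv φ) x₀) 0)^2)
    (hbdy : ∀ φ : ℝ → ℝ, ContDiff ℝ 2 φ → φ 0 = v 0 →
      (∀ x ∈ Icc (0:ℝ) 1, φ x ≤ v x) →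
      0 ≤ max (r * v 0 - (1/(2*r*c)) * (max (deriv (deriv φ) 0) 0)^2)
        (-(deriv φ 0))) :
    0 < v 0 := by
  have hIoo := self_le_of_concave_test hcont fun x₀ hx₀ φ hφ htouch hbelow hφ'' => by
    have := hint x₀ hx₀ φ hφ htouch hbelow
    rw [max_eq_right hφ''] at this
    nlinarith
  have hIcc : ∀ x ∈ Icc (0 : ℝ) 1, x ≤ v x := fun x hx =>
    continuousWithinAt_id.closure_le (by rwa [closure_Ioo zero_ne_one])
      ((hcont x hx).mono Ioo_subset_Icc_self) hIoo
  refine (by simpa using hIcc 0 (left_mem_Icc.2 zero_le_one) : 0 ≤ v 0).lt_of_ne fun h0 => ?_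
  have hbelow : ∀ x ∈ Icc (0 : ℝ) 1, 1 / 2 * x ^ 2 + 1 / 2 * x + 0 ≤ v x := fun x hx => by
    nlinarith [hIcc x hx, hx.1, hx.2]
  have key := hbdy _ (by fun_prop) (by simp [← h0]) hbelow
  rw [deriv_deriv_quadratic, deriv_quadratic, ← h0] at key
  norm_num at key
  exact key.not_gt (by positivity)

/-- Any concave viscosity supersolution of the HJB (with boundary condition
at 0) is strictly positive at the worst state 0. -/
theorem stmt11 (v : ℝ → ℝ) (r c : ℝ)
    (hr : 0 < r) (hc : 0 < c)
    (hcont : ContinuousOn v (Icc 0 1))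
    (hconc : ConcaveOn ℝ (Icc 0 1) v)
    (hint : ∀ x₀ ∈ Ioo (0:ℝ) 1, ∀ φ : ℝ → ℝ, ContDiff ℝ 2 φ → φ x₀ = v x₀ →
      (∀ x ∈ Icc (0:ℝ) 1, φ x ≤ v x) →
      0 ≤ r * v x₀ - r * x₀ - (1/(2*r*c)) * (max (deriv (deriv φ) x₀) 0)^2)
    (hbdy : ∀ φ : ℝ → ℝ, ContDiff ℝ 2 φ → φ 0 = v 0 →
      (∀ x ∈ Icc (0:ℝ) 1, φ x ≤ v x) →
      0 ≤ max (r * v 0 - (1/(2*r*c)) * (max (deriv (deriv φ) 0) 0)^2)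
        (-(deriv φ 0))) :
    0 < v 0 :=
  stmt11_general v r c hr hc hcont hint hbdy
end

section
/- Let v : [0,1] → ℝ be convex on [0, x̄] and concave on [x̲, 1] where 0 < x̲ ≤ x̄ < 1, with v affine (equal to the identity) on [x̲, x̄]. Suppose additionally that every supergradient of v at 0 (i.e., every p with v(x) ≤ v(0) + p·x + o(x) as x → 0⁺ admitting a C² upper test function) satisfies p ≥ 0, and every subgradient of v at 1 satisfies p ≥ 0 — as forced by the boundary viscosity conditions. Then v is non-decreasing on [0,1]. -/
open Set

/-! A negative chord slope from a point of `[xlow, 1)` to `1` would be the derivative at `1` of a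
`C²` test function touching `v` from below: the chord lies below the concave `v` between its
endpoints, and subtracting a steep enough parabola pushes it below the bounded function `v` on the
rest of `[0, 1]`. So `v ≤ v 1` on `[xlow, 1]`, and the minimum principle for concave functions
makes `v` monotone there. The reflection `v ↦ -v (-·)` turns the convex piece `[0, xbar]` into the
same situation, and the two pieces overlap. -/

variable {f : ℝ → ℝ} {lo a b : ℝ}

theorem ConvexOn.bddBelow_image_Icc (hf : ConvexOn ℝ (Icc a b) f) :
    BddBelow (f '' Icc a b) := by
  -- the midpoint value is at most the average of `f x` and of `f` at the mirror point `a + b - x`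
  refine ⟨2 * f ((a + b) / 2) - max (f a) (f b), ?_⟩
  rintro _ ⟨x, hx, rfl⟩
  have hab : a ≤ b := hx.1.trans hx.2
  have hx' : a + b - x ∈ Icc a b := ⟨by linarith [hx.2], by linarith [hx.1]⟩
  have hmid := hf.2 hx hx' (by norm_num : (0 : ℝ) ≤ 1 / 2) (by norm_num : (0 : ℝ) ≤ 1 / 2)
    (by norm_num)
  have hmax := hf.le_max_of_mem_Icc (left_mem_Icc.2 hab) (right_mem_Icc.2 hab) hx'
  simp only [smul_eq_mul] at hmid
  rw [show 1 / 2 * x + 1 / 2 * (a + b - x) = (a + b) / 2 by ring] at hmid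
  linarith

theorem ConvexOn.bddAbove_image_Icc (hf : ConvexOn ℝ (Icc a b) f) :
    BddAbove (f '' Icc a b) := by
  refine ⟨max (f a) (f b), ?_⟩
  rintro _ ⟨x, hx, rfl⟩
  have hab : a ≤ b := hx.1.trans hx.2
  exact hf.le_max_of_mem_Icc (left_mem_Icc.2 hab) (right_mem_Icc.2 hab) hx

theorem ConcaveOn.bddAbove_image_Icc (hf : ConcaveOn ℝ (Icc a b) f) :
    BddAbove (f '' Icc a b) := by
  have := hf.neg.bddBelow_image_Icc
  rwa [show -f = Neg.neg ∘ f from rfl, image_comp, image_neg_eq_neg, bddBelow_neg] at this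

theorem ConcaveOn.bddBelow_image_Icc (hf : ConcaveOn ℝ (Icc a b) f) :
    BddBelow (f '' Icc a b) := by
  have := hf.neg.bddAbove_image_Icc
  rwa [show -f = Neg.neg ∘ f from rfl, image_comp, image_neg_eq_neg, bddAbove_neg] at this

theorem ConcaveOn.add_slope_mul_le (hf : ConcaveOn ℝ (Icc a b) f) {x y : ℝ} (hx : x ∈ Icc a b)
    (hxb : x < b) (hy : y ∈ Icc x b) : f b + slope f b x * (y - b) ≤ f y := by
  rcases hy.2.eq_or_lt with rfl | hyb
  · simp
  have hb : b ∈ Icc a b := ⟨hx.1.trans hx.2, le_rfl⟩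
  have hslope : slope f b y ≤ slope f b x :=
    hf.antitoneOn_slope_lt hb ⟨hx, hxb⟩ ⟨⟨hx.1.trans hy.1, hy.2⟩, hyb⟩ hy.1
  rw [slope_def_field f b y] at hslope
  have key : (f y - f b) / (y - b) * (y - b) = f y - f b :=
    div_mul_cancel₀ _ (sub_ne_zero.2 hyb.ne)
  nlinarith [mul_le_mul_of_nonneg_right hslope (sub_nonneg.2 hy.2)]

theorem exists_contDiff_le_of_affine_le {x s m : ℝ} (hxb : x < b)
    (hm : ∀ y ∈ Icc lo b, m ≤ f y) (hline : ∀ y ∈ Icc x b, f b + s * (y - b) ≤ f y) :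
    ∃ φ : ℝ → ℝ, ContDiff ℝ 2 φ ∧ φ b = f b ∧ deriv φ b = s ∧ ∀ y ∈ Icc lo b, φ y ≤ f y := by
  set C := max 0 (f b + |s| * (b - lo) - m) / (b - x) ^ 2
  have hC : 0 ≤ C := by positivity
  have hCx : f b + |s| * (b - lo) - m ≤ C * (b - x) ^ 2 := by
    rw [div_mul_cancel₀ _ (pow_ne_zero 2 (sub_ne_zero.2 hxb.ne'))]
    exact le_max_right _ _
  refine ⟨fun y => f b + s * (y - b) - C * (y - b) ^ 2, by fun_prop, by simp, ?_, ?_⟩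
  · have h := (hasDerivAt_id b).sub_const b
    simpa using (((h.const_mul s).const_add (f b)).fun_sub ((h.pow 2).const_mul C)).deriv
  intro y hy
  rcases le_total x y with hxy | hyx
  · have := hline y ⟨hxy, hy.2⟩
    nlinarith [sq_nonneg (y - b)]
  · have hslope : s * (y - b) ≤ |s| * (b - lo) := by
      calc s * (y - b) ≤ |s| * |y - b| := by rw [← abs_mul]; exact le_abs_self _
        _ ≤ |s| * (b - lo) := by
          gcongr
          rw [abs_of_nonpos (by linarith [hy.2])]
          linarith [hy.1]
    have hsq : (b - x) ^ 2 ≤ (y - b) ^ 2 := by nlinarith [hy.2]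
    nlinarith [hm y hy, mul_le_mul_of_nonneg_left hsq hC]

section Subgradient

variable (hbdd : BddBelow (f '' Icc lo b))
  (hsub : ∀ φ : ℝ → ℝ, ContDiff ℝ 2 φ → φ b = f b → (∀ y ∈ Icc lo b, φ y ≤ f y) →
    0 ≤ deriv φ b)
include hbdd hsub

theorem ConcaveOn.le_right_of_subgradient (hf : ConcaveOn ℝ (Icc a b) f) {x : ℝ}
    (hx : x ∈ Icc a b) : f x ≤ f b := by
  rcases hx.2.eq_or_lt with rfl | hxb
  · rfl
  obtain ⟨m, hm⟩ := hbdd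
  obtain ⟨φ, hφ, hφb, hderiv, hle⟩ := exists_contDiff_le_of_affine_le hxb
    (fun y hy => hm (mem_image_of_mem f hy)) (fun y hy => hf.add_slope_mul_le hx hxb hy)
  have hslope := hsub φ hφ hφb hle
  rw [hderiv, slope_def_field] at hslope
  by_contra! hlt
  exact (div_neg_of_pos_of_neg (sub_pos.2 hlt) (sub_neg.2 hxb)).not_ge hslope

theorem ConcaveOn.monotoneOn_of_subgradient (hf : ConcaveOn ℝ (Icc a b) f) :
    MonotoneOn f (Icc a b) := by
  intro x hx y hy hxy
  have hmin := hf.min_le_of_mem_Icc hx ⟨hx.1.trans hx.2, le_rfl⟩ ⟨hxy, hy.2⟩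
  rwa [min_eq_left (hf.le_right_of_subgradient hbdd hsub hx)] at hmin

end Subgradient

theorem ConvexOn.monotoneOn_of_supergradient {hi : ℝ} (hf : ConvexOn ℝ (Icc a b) f)
    (hbdd : BddAbove (f '' Icc a hi))
    (hsuper : ∀ φ : ℝ → ℝ, ContDiff ℝ 2 φ → φ a = f a → (∀ y ∈ Icc a hi, f y ≤ φ y) →
      0 ≤ deriv φ a) :
    MonotoneOn f (Icc a b) := by
  set g : ℝ → ℝ := fun y => -f (-y)
  have hg : ConcaveOn ℝ (Icc (-b) (-a)) g := by
    have := (hf.comp_linearMap (-LinearMap.id)).neg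
    rwa [show (-LinearMap.id : ℝ →ₗ[ℝ] ℝ) ⁻¹' Icc a b = Icc (-b) (-a) by
      ext; simp [neg_le, le_neg, and_comm]] at this
  have hgbdd : BddBelow (g '' Icc (-hi) (-a)) := by
    obtain ⟨M, hM⟩ := hbdd
    refine ⟨-M, ?_⟩
    rintro _ ⟨y, hy, rfl⟩
    have := hM ⟨-y, ⟨by linarith [hy.2], by linarith [hy.1]⟩, rfl⟩
    simp only [g]
    linarith
  have hgsub : ∀ ψ : ℝ → ℝ, ContDiff ℝ 2 ψ → ψ (-a) = g (-a) →
      (∀ y ∈ Icc (-hi) (-a), ψ y ≤ g y) → 0 ≤ deriv ψ (-a) := by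
    intro ψ hψ hψa hle
    have := hsuper (fun x => -ψ (-x)) (by fun_prop) (by simp [hψa, g]) fun y hy => by
      have := hle (-y) ⟨by linarith [hy.2], by linarith [hy.1]⟩
      simp only [g, neg_neg] at this
      linarith
    simpa [deriv.neg', deriv_comp_neg] using this
  intro x hx y hy hxy
  have := hg.monotoneOn_of_subgradient hgbdd hgsub ⟨neg_le_neg hy.2, neg_le_neg hy.1⟩
    ⟨neg_le_neg hx.2, neg_le_neg hx.1⟩ (neg_le_neg hxy)
  simpa [g] using this

theorem stmt13_general (v : ℝ → ℝ) (xlow xbar : ℝ)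
    (h0 : 0 < xlow) (h12 : xlow ≤ xbar) (h1 : xbar < 1)
    (hconv : ConvexOn ℝ (Icc 0 xbar) v)
    (hconc : ConcaveOn ℝ (Icc xlow 1) v)
    (hsuper0 : ∀ φ : ℝ → ℝ, ContDiff ℝ 2 φ → φ 0 = v 0 →
      (∀ x ∈ Icc (0:ℝ) 1, v x ≤ φ x) → 0 ≤ deriv φ 0)
    (hsub1 : ∀ φ : ℝ → ℝ, ContDiff ℝ 2 φ → φ 1 = v 1 →
      (∀ x ∈ Icc (0:ℝ) 1, φ x ≤ v x) → 0 ≤ deriv φ 1) :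
    MonotoneOn v (Icc 0 1) := by
  have hxlow1 : xlow ≤ 1 := by linarith
  have hcover : v '' Icc 0 1 = v '' Icc 0 xbar ∪ v '' Icc xlow 1 := by
    rw [← image_union, Icc_union_Icc' h12 zero_le_one, min_eq_left h0.le, max_eq_right h1.le]
  have hbddBelow : BddBelow (v '' Icc 0 1) :=
    hcover ▸ hconv.bddBelow_image_Icc.union hconc.bddBelow_image_Icc
  have hbddAbove : BddAbove (v '' Icc 0 1) :=
    hcover ▸ hconv.bddAbove_image_Icc.union hconc.bddAbove_image_Icc
  have hleft := (hconv.monotoneOn_of_supergradient hbddAbove hsuper0).mono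
    (Icc_subset_Icc_right h12)
  have hright := hconc.monotoneOn_of_subgradient hbddBelow hsub1
  rw [← Icc_union_Icc_eq_Icc h0.le hxlow1]
  exact hleft.union_right hright (isGreatest_Icc h0.le) (isLeast_Icc hxlow1)

/-- Monotonicity of the value function: convex on the left, concave on the
right, identity in the middle, with boundary viscosity conditions forcing
nonnegative slopes at 0 and 1, imply v is non-decreasing on [0,1]. -/
theorem stmt13 (v : ℝ → ℝ) (xlow xbar : ℝ)
    (h0 : 0 < xlow) (h12 : xlow ≤ xbar) (h1 : xbar < 1)
    (hconv : ConvexOn ℝ (Icc 0 xbar) v)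
    (hconc : ConcaveOn ℝ (Icc xlow 1) v)
    (hid : ∀ x ∈ Icc xlow xbar, v x = x)
    (hsuper0 : ∀ φ : ℝ → ℝ, ContDiff ℝ 2 φ → φ 0 = v 0 →
      (∀ x ∈ Icc (0:ℝ) 1, v x ≤ φ x) → 0 ≤ deriv φ 0)
    (hsub1 : ∀ φ : ℝ → ℝ, ContDiff ℝ 2 φ → φ 1 = v 1 →
      (∀ x ∈ Icc (0:ℝ) 1, φ x ≤ v x) → 0 ≤ deriv φ 1) :
    MonotoneOn v (Icc 0 1) :=
  stmt13_general v xlow xbar h0 h12 h1 hconv hconc hsuper0 hsub1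
end

section
/- Let v : [0,1] → ℝ be continuous and suppose that at some x' ∈ (0,1), the one-sided derivatives exist with v'₋(x') < v'₊(x') (a convex kink). Then for every p ∈ (v'₋(x'), v'₊(x')) and every M ∈ ℝ, the pair (p, M) belongs to the second-order subjet of v at x', i.e., there is a C² function φ with φ'(x') = p, φ''(x') = M, and x' a local minimum of v − φ. Consequently, if v is a viscosity supersolution of r·(v(x) − x) − b(x)·M − (1/(2rc))·(M₊)² ≥ 0 with b(x') ≥ 0, taking M large enough yields a contradiction; hence a viscosity supersolution of this equation has no convex kinks in (0,1). -/
open Set Filter Topology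

/-! At a convex kink the slope `(v y - v x') / (y - x')` tends to `l` from the left and to `u` from
the right, while the corresponding slope of the quadratic `v x' + p (y - x') + M/2 (y - x')²` tends
to `p ∈ (l, u)`. Comparing slopes on each side puts `v` above the quadratic near `x'`, whatever `M`
is. In the supersolution inequality the term `- b M - M²/(2rc)` then beats `r (v x' - x')` once `M`
is large. -/

noncomputable def quadraticJet (x a p M : ℝ) : ℝ → ℝ :=
  fun y => a + p * (y - x) + M / 2 * (y - x) ^ 2

namespace quadraticJet

variable (x a p M : ℝ)

theorem contDiff {n : WithTop ℕ∞} : ContDiff ℝ n (quadraticJet x a p M) := by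
  unfold quadraticJet; fun_prop

theorem hasDerivAt (y : ℝ) : HasDerivAt (quadraticJet x a p M) (p + M * (y - x)) y := by
  have h := (((hasDerivAt_id y).sub_const x).const_mul p).const_add a |>.add
    ((((hasDerivAt_id y).sub_const x).pow 2).const_mul (M / 2))
  exact h.congr_deriv (by simp only [id]; ring)

theorem deriv_eq : deriv (quadraticJet x a p M) = fun y => p + M * (y - x) :=
  funext fun y => (hasDerivAt x a p M y).deriv

theorem deriv_apply_self : deriv (quadraticJet x a p M) x = p := by
  simp [deriv_eq]

theorem deriv_deriv_apply_self : deriv (deriv (quadraticJet x a p M)) x = M := by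
  simp [deriv_eq]

end quadraticJet

section ConvexKink

variable {f : ℝ → ℝ} {x l u p : ℝ}

theorem eventually_quadraticJet_le_of_hasDerivWithinAt_Iio (M : ℝ)
    (hl : HasDerivWithinAt f l (Iio x) x) (hp : l < p) :
    ∀ᶠ y in 𝓝[<] x, quadraticJet x (f x) p M y ≤ f y := by
  have hslope := (hasDerivWithinAt_iff_tendsto_slope' self_notMem_Iio).mp hl
  have hjet : Tendsto (fun y => p + M / 2 * (y - x)) (𝓝[<] x) (𝓝 p) := by
    have : Continuous fun y => p + M / 2 * (y - x) := by fun_prop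
    simpa using (this.tendsto x).mono_left nhdsWithin_le_nhds
  filter_upwards [hslope.eventually_lt hjet hp, self_mem_nhdsWithin] with y hy hy_mem
  have hyx : y - x < 0 := sub_neg.mpr hy_mem
  rw [slope_def_field, div_lt_iff_of_neg hyx] at hy
  simp only [quadraticJet]
  nlinarith

theorem eventually_quadraticJet_le_of_hasDerivWithinAt_Ioi (M : ℝ)
    (hu : HasDerivWithinAt f u (Ioi x) x) (hp : p < u) :
    ∀ᶠ y in 𝓝[>] x, quadraticJet x (f x) p M y ≤ f y := by
  have hslope := (hasDerivWithinAt_iff_tendsto_slope' self_notMem_Ioi).mp hu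
  have hjet : Tendsto (fun y => p + M / 2 * (y - x)) (𝓝[>] x) (𝓝 p) := by
    have : Continuous fun y => p + M / 2 * (y - x) := by fun_prop
    simpa using (this.tendsto x).mono_left nhdsWithin_le_nhds
  filter_upwards [hjet.eventually_lt hslope hp, self_mem_nhdsWithin] with y hy hy_mem
  have hyx : 0 < y - x := sub_pos.mpr hy_mem
  rw [slope_def_field, lt_div_iff₀ hyx] at hy
  simp only [quadraticJet]
  nlinarith

theorem isLocalMin_sub_quadraticJet_of_convex_kink (M : ℝ)
    (hl : HasDerivWithinAt f l (Iio x) x) (hu : HasDerivWithinAt f u (Ioi x) x)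
    (hp : p ∈ Ioo l u) :
    IsLocalMin (fun y => f y - quadraticJet x (f x) p M y) x := by
  have hne : ∀ᶠ y in 𝓝[≠] x, quadraticJet x (f x) p M y ≤ f y := by
    rw [← nhdsLT_sup_nhdsGT, eventually_sup]
    exact ⟨eventually_quadraticJet_le_of_hasDerivWithinAt_Iio M hl hp.1,
      eventually_quadraticJet_le_of_hasDerivWithinAt_Ioi M hu hp.2⟩
  have hx : quadraticJet x (f x) p M x = f x := by simp [quadraticJet]
  have : ∀ᶠ y in 𝓝 x, quadraticJet x (f x) p M y ≤ f y := by
    rw [← nhdsNE_sup_pure, eventually_sup, eventually_pure]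
    exact ⟨hne, hx.le⟩
  filter_upwards [this] with y hy
  simp only [hx, sub_self, sub_nonneg, hy]

end ConvexKink

theorem exists_lt_mul_add_mul_max_sq (K : ℝ) {b k : ℝ} (hb : 0 ≤ b) (hk : 0 < k) :
    ∃ M, K < b * M + k * max M 0 ^ 2 := by
  refine ⟨|K| / k + 1, ?_⟩
  have hM : 1 ≤ |K| / k + 1 := by have := div_nonneg (abs_nonneg K) hk.le; linarith
  have hkM : k * (|K| / k + 1) = |K| + k := by field_simp
  rw [max_eq_left (by linarith)]
  nlinarith [le_abs_self K, mul_le_mul_of_nonneg_left hM (by linarith : (0:ℝ) ≤ |K| / k + 1)]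

theorem stmt14_general (v b : ℝ → ℝ) (r c x' l u : ℝ)
    (hr : 0 < r) (hc : 0 < c) (hx' : x' ∈ Ioo (0:ℝ) 1)
    (hbnn : ∀ x ∈ Icc (0:ℝ) 1, 0 ≤ b x)
    (hl : HasDerivWithinAt v l (Iio x') x')
    (hu : HasDerivWithinAt v u (Ioi x') x')
    (hlu : l < u) :
    (∀ p ∈ Ioo l u, ∀ M : ℝ, ∃ φ : ℝ → ℝ, ContDiff ℝ 2 φ ∧
      deriv φ x' = p ∧ deriv (deriv φ) x' = M ∧
      IsLocalMin (fun x => v x - φ x) x') ∧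
    ((∀ x₀ ∈ Ioo (0:ℝ) 1, ∀ p M : ℝ,
        (∃ φ : ℝ → ℝ, ContDiff ℝ 2 φ ∧ deriv φ x₀ = p ∧
          deriv (deriv φ) x₀ = M ∧ IsLocalMin (fun x => v x - φ x) x₀) →
        0 ≤ r * (v x₀ - x₀) - b x₀ * M - (1/(2*r*c)) * (max M 0)^2) →
      False) := by
  have hsubjet : ∀ p ∈ Ioo l u, ∀ M : ℝ, ∃ φ : ℝ → ℝ, ContDiff ℝ 2 φ ∧
      deriv φ x' = p ∧ deriv (deriv φ) x' = M ∧ IsLocalMin (fun x => v x - φ x) x' :=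
    fun p hp M => ⟨quadraticJet x' (v x') p M, quadraticJet.contDiff _ _ _ _,
      quadraticJet.deriv_apply_self _ _ _ _, quadraticJet.deriv_deriv_apply_self _ _ _ _,
      isLocalMin_sub_quadraticJet_of_convex_kink M hl hu hp⟩
  refine ⟨hsubjet, fun hsuper => ?_⟩
  obtain ⟨M, hM⟩ := exists_lt_mul_add_mul_max_sq (r * (v x' - x'))
    (hbnn x' (Ioo_subset_Icc_self hx')) (by positivity : 0 < 1 / (2 * r * c))
  have := hsuper x' hx' ((l + u) / 2) M (hsubjet _ ⟨by linarith, by linarith⟩ M)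
  linarith

/-- A convex kink puts (p, M) in the second-order subjet for every
p between the one-sided derivatives and every M; hence a viscosity
supersolution of the HJB has no convex kinks. -/
theorem stmt14 (v b : ℝ → ℝ) (r c x' l u : ℝ)
    (hr : 0 < r) (hc : 0 < c) (hx' : x' ∈ Ioo (0:ℝ) 1)
    (hcont : ContinuousOn v (Icc 0 1))
    (hbnn : ∀ x ∈ Icc (0:ℝ) 1, 0 ≤ b x)
    (hl : HasDerivWithinAt v l (Iio x') x')
    (hu : HasDerivWithinAt v u (Ioi x') x')
    (hlu : l < u) :
    (∀ p ∈ Ioo l u, ∀ M : ℝ, ∃ φ : ℝ → ℝ, ContDiff ℝ 2 φ ∧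
      deriv φ x' = p ∧ deriv (deriv φ) x' = M ∧
      IsLocalMin (fun x => v x - φ x) x') ∧
    ((∀ x₀ ∈ Ioo (0:ℝ) 1, ∀ p M : ℝ,
        (∃ φ : ℝ → ℝ, ContDiff ℝ 2 φ ∧ deriv φ x₀ = p ∧
          deriv (deriv φ) x₀ = M ∧ IsLocalMin (fun x => v x - φ x) x₀) →
        0 ≤ r * (v x₀ - x₀) - b x₀ * M - (1/(2*r*c)) * (max M 0)^2) →
      False) :=
  stmt14_general v b r c x' l u hr hc hx' hbnn hl hu hlu
end

section
/- Let X be a real-valued continuous stochastic process on a filtered probability space which is a bounded submartingale taking values in [0, x̲] for some x̲ ∈ (0,1], such that X converges almost surely to a limit X_∞ (by the martingale convergence theorem). Suppose additionally that the quadratic-variation density of X at time t is 2·a(X_t) where a : [0, x̲] → ℝ₊ is continuous, strictly positive on [0, x̲), and zero at x̲. Then P(X_∞ ∈ [0, x̲)) = 0, i.e. X_∞ = x̲ almost surely. -/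
open Set Filter MeasureTheory
open scoped ENNReal

/-- Floor approximations `⌊u * (m+1)⌋ / (m+1)` converge to `u`. -/
lemma floor_approx_tendsto (u : ℝ) :
    Tendsto (fun m : ℕ => ((⌊u * (m + 1 : ℝ)⌋ : ℝ) / (m + 1 : ℝ))) atTop (nhds u) := by
  have hlow : ∀ m : ℕ, u - 1 / (m + 1 : ℝ) ≤ (⌊u * (m + 1 : ℝ)⌋ : ℝ) / (m + 1 : ℝ) := by
    intro m
    have hm : (0 : ℝ) < (m : ℝ) + 1 := by positivity
    have hfl : u * ((m : ℝ) + 1) - 1 ≤ (⌊u * (m + 1 : ℝ)⌋ : ℝ) :=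
      (Int.sub_one_lt_floor (u * (m + 1 : ℝ))).le
    rw [le_div_iff₀ hm, sub_mul, div_mul_cancel₀ _ hm.ne']
    linarith
  have hhigh : ∀ m : ℕ, (⌊u * (m + 1 : ℝ)⌋ : ℝ) / (m + 1 : ℝ) ≤ u := by
    intro m
    have hm : (0 : ℝ) < (m : ℝ) + 1 := by positivity
    rw [div_le_iff₀ hm]
    exact Int.floor_le _
  have h1 : Tendsto (fun m : ℕ => u - 1 / (m + 1 : ℝ)) atTop (nhds u) := by
    have h0 := tendsto_one_div_add_atTop_nhds_zero_nat (𝕜 := ℝ)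
    have h2 : Tendsto (fun _ : ℕ => u) atTop (nhds u) := tendsto_const_nhds
    simpa using h2.sub h0
  exact tendsto_of_tendsto_of_tendsto_of_le_of_le h1 tendsto_const_nhds hlow hhigh

set_option maxHeartbeats 2000000 in
/-- A bounded continuous submartingale on [0, x̲] with quadratic-variation
density 2·a(X_t), where a is continuous, positive on [0, x̲) and zero at x̲,
converges almost surely to x̲. -/
theorem stmt15 {Ω : Type*} {m0 : MeasurableSpace Ω} {μ : Measure Ω}
    [IsProbabilityMeasure μ]
    (ℱ : Filtration ℝ m0) (X : ℝ → Ω → ℝ) (Xlim : Ω → ℝ) (a : ℝ → ℝ)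
    (xlow : ℝ) (hxlow : xlow ∈ Ioc (0:ℝ) 1)
    (hsub : Submartingale X ℱ μ)
    (hbdd : ∀ t : ℝ, ∀ᵐ ω ∂μ, X t ω ∈ Icc 0 xlow)
    (hcont : ∀ᵐ ω ∂μ, Continuous fun t => X t ω)
    (hlim : ∀ᵐ ω ∂μ, Tendsto (fun t => X t ω) atTop (nhds (Xlim ω)))
    (hacont : ContinuousOn a (Icc 0 xlow))
    (hapos : ∀ x ∈ Ico (0:ℝ) xlow, 0 < a x)
    (haxlow : a xlow = 0)
    (hqv : ∀ s t : ℝ, s ≤ t →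
      (μ[fun ω => (X t ω - X s ω)^2 | ℱ s]) =ᵐ[μ]
      (μ[fun ω => ∫ u in Icc s t, 2 * a (X u ω) | ℱ s])) :
    μ {ω | Xlim ω ∈ Ico 0 xlow} = 0 := by
  obtain ⟨hx0, hx1⟩ := hxlow
  -- the clamped version of `a`
  set proj : ℝ → ℝ := fun x => max 0 (min x xlow) with hprojdef
  have hprojmem : ∀ x, proj x ∈ Icc 0 xlow := by
    intro x
    refine ⟨le_max_left _ _, max_le (le_of_lt hx0) (min_le_right _ _)⟩
  have hprojcont : Continuous proj := continuous_const.max (continuous_id.min continuous_const)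
  have hprojid : ∀ x ∈ Icc 0 xlow, proj x = x := by
    intro x hx
    simp only [hprojdef]
    rw [min_eq_left hx.2, max_eq_right hx.1]
  set a' : ℝ → ℝ := fun x => a (proj x) with ha'def
  have ha'cont : Continuous a' := hacont.comp_continuous hprojcont hprojmem
  have ha'eq : ∀ x ∈ Icc 0 xlow, a' x = a x := fun x hx => by
    simp only [ha'def]; rw [hprojid x hx]
  have ha'nonneg : ∀ x, 0 ≤ a' x := by
    intro x
    rcases eq_or_lt_of_le (hprojmem x).2 with h | h
    · simp only [ha'def]; rw [h, haxlow]
    · exact (hapos _ ⟨(hprojmem x).1, h⟩).le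
  -- a bound for `a'`
  obtain ⟨C, hC⟩ : ∃ C, ∀ y ∈ Icc 0 xlow, ‖a y‖ ≤ C :=
    isCompact_Icc.exists_bound_of_continuousOn hacont
  have ha'bdd : ∀ x, ‖a' x‖ ≤ C := fun x => hC _ (hprojmem x)
  have hb2 : ∀ x, ‖2 * a' x‖ ≤ 2 * C := by
    intro x
    rw [norm_mul]
    have h1 := ha'bdd x
    have h2 : ‖(2:ℝ)‖ = 2 := by norm_num
    rw [h2]
    nlinarith [norm_nonneg (a' x)]
  -- measurability of X t
  have hXm : ∀ t : ℝ, Measurable (X t) := fun t =>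
    ((hsub.stronglyMeasurable t).mono (ℱ.le t)).measurable
  -- a.e. all values lie in the interval
  have hboundedae : ∀ᵐ ω ∂μ, ∀ t, X t ω ∈ Icc 0 xlow := by
    have h1 : ∀ᵐ ω ∂μ, ∀ q : ℚ, X q ω ∈ Icc 0 xlow := ae_all_iff.2 fun q => hbdd q
    filter_upwards [h1, hcont] with ω hq hc
    intro t
    have hcl : IsClosed {t : ℝ | X t ω ∈ Icc 0 xlow} := isClosed_Icc.preimage hc
    have hsub' : Set.range ((↑) : ℚ → ℝ) ⊆ {t : ℝ | X t ω ∈ Icc 0 xlow} := by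
      rintro _ ⟨q, rfl⟩; exact hq q
    have : closure (Set.range ((↑) : ℚ → ℝ)) ⊆ {t : ℝ | X t ω ∈ Icc 0 xlow} :=
      closure_minimal hsub' hcl
    rw [Rat.denseRange_cast.closure_eq] at this
    exact this (mem_univ t)
  -- the cumulative quadratic variation process
  set Y : ℕ → Ω → ℝ := fun n ω => ∫ u in Icc (0:ℝ) (n:ℝ), 2 * a' (X u ω) with hYdef
  have hYnonneg : ∀ n ω, 0 ≤ Y n ω := fun n ω =>
    integral_nonneg fun u => by have := ha'nonneg (X u ω); positivity
  -- measurability of Y n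
  have hYmeas : ∀ n : ℕ, AEStronglyMeasurable (Y n) μ := by
    intro n
    set g : ℕ → Ω → ℝ := fun m ω =>
      ∫ u in Icc (0:ℝ) (n:ℝ), 2 * a' (X ((⌊u * (m + 1 : ℝ)⌋ : ℝ) / (m + 1 : ℝ)) ω) with hgdef
    have hgm : ∀ m : ℕ, StronglyMeasurable (g m) := by
      intro m
      have h1 : Measurable fun p : Ω × ℤ => 2 * a' (X ((p.2 : ℝ) / (m + 1 : ℝ)) p.1) := by
        refine measurable_from_prod_countable_left fun k => ?_
        have h := (ha'cont.measurable.comp (hXm ((k : ℝ) / (m + 1 : ℝ)))).const_mul 2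
        exact h
      have h2 : Measurable fun p : ℝ × Ω =>
          2 * a' (X ((⌊p.1 * (m + 1 : ℝ)⌋ : ℝ) / (m + 1 : ℝ)) p.2) := by
        have hfl : Measurable fun p : ℝ × Ω => (p.2, ⌊p.1 * (m + 1 : ℝ)⌋) :=
          measurable_snd.prodMk (Int.measurable_floor.comp (measurable_fst.mul_const _))
        exact h1.comp hfl
      exact h2.stronglyMeasurable.integral_prod_left'
        (μ := (volume : Measure ℝ).restrict (Icc (0:ℝ) (n:ℝ)))
    have hconv : ∀ᵐ ω ∂μ, Tendsto (fun m => g m ω) atTop (nhds (Y n ω)) := by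
      filter_upwards [hcont] with ω hcω
      refine tendsto_integral_of_dominated_convergence (fun _ => 2 * C) ?_ ?_ ?_ ?_
      · intro m
        have : Measurable fun u : ℝ =>
            2 * a' (X ((⌊u * (m + 1 : ℝ)⌋ : ℝ) / (m + 1 : ℝ)) ω) := by
          have hc2 : Continuous fun v : ℝ => 2 * a' (X v ω) :=
            (by exact continuous_const.mul (ha'cont.comp hcω) : Continuous fun v : ℝ => 2 * a' (X v ω))
          have hmfl : Measurable fun u : ℝ => ((⌊u * (m + 1 : ℝ)⌋ : ℝ) / (m + 1 : ℝ)) :=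
            ((measurable_of_countable (fun k : ℤ => ((k : ℝ) / (m + 1 : ℝ)))).comp
              (Int.measurable_floor.comp (measurable_id.mul_const _)))
          exact hc2.measurable.comp hmfl
        exact this.aestronglyMeasurable
      · exact integrable_const _
      · intro m
        exact ae_of_all _ fun u => hb2 _
      · refine ae_of_all _ fun u => ?_
        have hc2 : Continuous fun v : ℝ => 2 * a' (X v ω) :=
          (by exact continuous_const.mul (ha'cont.comp hcω) : Continuous fun v : ℝ => 2 * a' (X v ω))
        exact (hc2.tendsto u).comp (floor_approx_tendsto u)
    exact aestronglyMeasurable_of_tendsto_ae atTop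
      (fun m => (hgm m).aestronglyMeasurable) hconv
  -- integrability of Y n
  have hYint : ∀ n : ℕ, Integrable (Y n) μ := by
    intro n
    refine ⟨hYmeas n, ?_⟩
    refine HasFiniteIntegral.of_bounded
      (C := 2 * C * ((volume (Icc (0:ℝ) (n:ℝ))).toReal)) ?_
    filter_upwards [hcont] with ω hcω
    have hc2 : Continuous fun v : ℝ => 2 * a' (X v ω) :=
      (by exact continuous_const.mul (ha'cont.comp hcω) : Continuous fun v : ℝ => 2 * a' (X v ω))
    have := norm_setIntegral_le_of_norm_le_const
      (μ := (volume : Measure ℝ)) (s := Icc (0:ℝ) (n:ℝ))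
      (f := fun u => 2 * a' (X u ω)) (C := 2 * C)
      (by rw [Real.volume_Icc]; exact ENNReal.ofReal_lt_top)
      (fun u _ => hb2 _)
    simpa [hYdef] using this
  -- expectation bound via the conditional QV identity
  haveI : SigmaFinite (μ.trim (ℱ.le 0)) := by infer_instance
  have hsqint : ∀ n : ℕ, Integrable (fun ω => (X (n:ℝ) ω - X 0 ω)^2) μ := by
    intro n
    refine ⟨(((hXm (n:ℝ)).sub (hXm 0)).pow_const 2).aestronglyMeasurable, ?_⟩
    refine HasFiniteIntegral.of_bounded (C := 1) ?_
    filter_upwards [hbdd (n:ℝ), hbdd 0] with ω h1 h2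
    have habs : |X (n:ℝ) ω - X 0 ω| ≤ 1 := by
      rw [abs_le]; constructor <;> nlinarith [h1.1, h1.2, h2.1, h2.2]
    have hnorm : ‖(X (n:ℝ) ω - X 0 ω)^2‖ = (X (n:ℝ) ω - X 0 ω)^2 := by
      rw [Real.norm_eq_abs, abs_of_nonneg (sq_nonneg _)]
    rw [hnorm]
    nlinarith [sq_abs (X (n:ℝ) ω - X 0 ω), abs_nonneg (X (n:ℝ) ω - X 0 ω)]
  have hYexp : ∀ n : ℕ, ∫ ω, Y n ω ∂μ ≤ 1 := by
    intro n
    have hq := hqv 0 (n:ℝ) (Nat.cast_nonneg n)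
    have hgY : (fun ω => ∫ u in Icc (0:ℝ) (n:ℝ), 2 * a (X u ω)) =ᵐ[μ] Y n := by
      filter_upwards [hboundedae] with ω hb
      simp only [hYdef]
      refine integral_congr_ae (ae_of_all _ fun u => ?_)
      simp only [ha'eq (X u ω) (hb u)]
    have hcongr : (μ[Y n|ℱ 0]) =ᵐ[μ] (μ[fun ω => (X (n:ℝ) ω - X 0 ω)^2|ℱ 0]) :=
      ((condExp_congr_ae hgY).symm).trans hq.symm
    calc ∫ ω, Y n ω ∂μ = ∫ ω, (μ[Y n|ℱ 0]) ω ∂μ := (integral_condExp (ℱ.le 0)).symm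
      _ = ∫ ω, (μ[fun ω => (X (n:ℝ) ω - X 0 ω)^2|ℱ 0]) ω ∂μ := integral_congr_ae hcongr
      _ = ∫ ω, (X (n:ℝ) ω - X 0 ω)^2 ∂μ := integral_condExp (ℱ.le 0)
      _ ≤ ∫ _ω, (1:ℝ) ∂μ := by
          refine integral_mono_ae (hsqint n) (integrable_const 1) ?_
          filter_upwards [hbdd (n:ℝ), hbdd 0] with ω h1 h2
          nlinarith [h1.1, h1.2, h2.1, h2.2]
      _ = 1 := by simp
  -- monotone convergence: the total quadratic variation is a.e. finite
  set Z : ℕ → Ω → ENNReal := fun n ω => ENNReal.ofReal (Y n ω) with hZdef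
  have hZm : ∀ n, AEMeasurable (Z n) μ := fun n =>
    ENNReal.measurable_ofReal.comp_aemeasurable (hYmeas n).aemeasurable
  have hZle : ∀ n, ∫⁻ ω, Z n ω ∂μ ≤ 1 := by
    intro n
    rw [hZdef]
    rw [← ofReal_integral_eq_lintegral_ofReal (hYint n) (ae_of_all _ fun ω => hYnonneg n ω)]
    exact ENNReal.ofReal_le_one.2 (hYexp n)
  have hmono : ∀ᵐ ω ∂μ, Monotone fun n => Z n ω := by
    filter_upwards [hcont] with ω hcω
    intro k m hkm
    refine ENNReal.ofReal_le_ofReal ?_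
    have hc2 : Continuous fun v : ℝ => 2 * a' (X v ω) := (by exact continuous_const.mul (ha'cont.comp hcω) : Continuous fun v : ℝ => 2 * a' (X v ω))
    refine setIntegral_mono_set (hc2.integrableOn_Icc) (ae_of_all _ fun u => by
      have := ha'nonneg (X u ω); positivity) ?_
    exact HasSubset.Subset.eventuallyLE (Icc_subset_Icc le_rfl (by exact_mod_cast hkm))
  have hfin : ∀ᵐ ω ∂μ, (⨆ n : ℕ, Z n ω) < ⊤ := by
    refine ae_lt_top' (AEMeasurable.iSup hZm) ?_
    rw [lintegral_iSup' hZm hmono]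
    exact (ne_of_lt (lt_of_le_of_lt (iSup_le hZle) (by norm_num)))
  -- on the event {Xlim ∈ Ico 0 xlow} the total quadratic variation diverges
  have hfinal : ∀ᵐ ω ∂μ, Xlim ω ∉ Ico 0 xlow := by
    filter_upwards [hfin, hboundedae, hcont, hlim] with ω hf hb hcω hl
    intro hmem
    have hXlimIcc : Xlim ω ∈ Icc 0 xlow := ⟨hmem.1, hmem.2.le⟩
    set c : ℝ := a (Xlim ω) with hcdef
    have hcpos : 0 < c := hapos _ hmem
    have hta : Tendsto (fun u => 2 * a' (X u ω)) atTop (nhds (2 * c)) := by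
      have h1 : Tendsto (fun u => a' (X u ω)) atTop (nhds (a' (Xlim ω))) :=
        (ha'cont.tendsto (Xlim ω)).comp hl
      rw [ha'eq _ hXlimIcc] at h1
      exact h1.const_mul 2
    have hev : ∀ᶠ u in atTop, c ≤ 2 * a' (X u ω) :=
      hta.eventually_const_le (by linarith)
    obtain ⟨T, hT⟩ := eventually_atTop.1 hev
    set T0 : ℝ := max T 0 with hT0def
    have hT0nn : 0 ≤ T0 := le_max_right _ _
    -- growth estimate
    have hgrow : ∀ n : ℕ, T0 ≤ (n:ℝ) → c * ((n:ℝ) - T0) ≤ Y n ω := by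
      intro n hn
      have hc2 : Continuous fun v : ℝ => 2 * a' (X v ω) := (by exact continuous_const.mul (ha'cont.comp hcω) : Continuous fun v : ℝ => 2 * a' (X v ω))
      have hsubset : Icc T0 (n:ℝ) ⊆ Icc (0:ℝ) (n:ℝ) := Icc_subset_Icc hT0nn le_rfl
      have h1 : ∫ u in Icc T0 (n:ℝ), 2 * a' (X u ω) ≤ Y n ω := by
        refine setIntegral_mono_set (hc2.integrableOn_Icc) (ae_of_all _ fun u => by
          have := ha'nonneg (X u ω); positivity) (HasSubset.Subset.eventuallyLE hsubset)
      have h2 : ∫ u in Icc T0 (n:ℝ), c ≤ ∫ u in Icc T0 (n:ℝ), 2 * a' (X u ω) := by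
        refine setIntegral_mono_on (integrable_const _) hc2.integrableOn_Icc
          measurableSet_Icc fun u hu => ?_
        exact hT u (le_trans (le_max_left _ _) hu.1)
      have h3 : ∫ u in Icc T0 (n:ℝ), c = ((n:ℝ) - T0) * c := by
        rw [setIntegral_const, measureReal_def, Real.volume_Icc, ENNReal.toReal_ofReal (by linarith), smul_eq_mul]
      linarith
    -- contradiction with finiteness
    set S : ℝ≥0∞ := ⨆ n : ℕ, Z n ω with hSdef
    have hSne : S ≠ ⊤ := hf.ne
    have hYle : ∀ n : ℕ, Y n ω ≤ S.toReal := by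
      intro n
      have h1 : Z n ω ≤ S := le_iSup (fun n => Z n ω) n
      rw [hZdef] at h1
      exact (ENNReal.ofReal_le_iff_le_toReal hSne).1 h1
    obtain ⟨n, hn⟩ := exists_nat_ge (T0 + (S.toReal + 1) / c)
    have hn1 : T0 ≤ (n:ℝ) := by
      have : 0 ≤ (S.toReal + 1) / c := by
        have : 0 ≤ S.toReal := ENNReal.toReal_nonneg
        positivity
      linarith
    have h4 : S.toReal + 1 ≤ c * ((n:ℝ) - T0) := by
      rw [← div_le_iff₀' hcpos]
      linarith
    have h5 := hgrow n hn1
    have h6 := hYle n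
    linarith
  have := ae_iff.mp hfinal
  simpa using this
end

section
/- Let v : [0, x̄] → ℝ, x̄ ∈ (0,1), be twice continuously differentiable in a neighborhood of x̄ with v(x̄) > x̄, hence v''(x̄) = r√(2c)·√(v(x̄) − x̄) > 0, where v satisfies r(v(x) − x) = b(x)·v''(x) + (1/(2rc))(v''(x)₊)² for x ≥ x̄ near x̄, with b continuous, b(x̄) = 0, b differentiable on (x̄, 1] and (b(x̄ + ε) − b(x̄))/ε → +∞ as ε ↓ 0. If additionally v is three times continuously differentiable near x̄, then a contradiction arises; hence v(x̄) ≤ x̄. -/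
open Set Filter Topology

/-!
Put `g x = r (v x - x) - v''(x)² / (2rc)`. Where `v'' > 0` the HJB equation says exactly
`b v'' = g`, and the formula for `v''(x̄)` says `g x̄ = 0`. As `v` is `C³`, `g` is
differentiable at `x̄`, so `b (x̄ + ε) / ε = (g (x̄ + ε) / ε) / v''(x̄ + ε)` has the finite
limit `g'(x̄) / v''(x̄)` as `ε ↓ 0`, which contradicts the infinite right derivative of `b`.
-/

lemma tendsto_add_nhdsGT_zero (a : ℝ) : Tendsto (a + ·) (𝓝[>] 0) (𝓝[>] a) :=
  tendsto_nhdsWithin_iff.2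
    ⟨by simpa using ((continuous_const_add a).tendsto 0).mono_left nhdsWithin_le_nhds,
      eventually_nhdsWithin_of_forall fun _ hε => lt_add_of_pos_right a hε⟩

lemma tendsto_div_of_mul_eq_of_hasDerivAt {b w g : ℝ → ℝ} {a g' : ℝ}
    (hg : HasDerivAt g g' a) (hga : g a = 0) (hw : ContinuousWithinAt w (Ioi a) a)
    (hwa : w a ≠ 0) (hbw : ∀ᶠ x in 𝓝[>] a, b x * w x = g x) :
    Tendsto (fun ε => b (a + ε) / ε) (𝓝[>] 0) (𝓝 (g' / w a)) := by
  have hslope : Tendsto (fun ε => g (a + ε) / ε) (𝓝[>] 0) (𝓝 g') := by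
    simpa [hga, div_eq_inv_mul] using hg.tendsto_slope_zero_right
  have hw' : Tendsto (fun ε => w (a + ε)) (𝓝[>] 0) (𝓝 (w a)) :=
    hw.tendsto.comp (tendsto_add_nhdsGT_zero a)
  refine (hslope.div hw' hwa).congr' ?_
  filter_upwards [(tendsto_add_nhdsGT_zero a).eventually hbw, hw'.eventually_ne hwa]
    with ε hbwε hwε
  rw [Pi.div_apply, ← hbwε]
  field_simp

lemma mul_sub_one_div_mul_sq_mul_sqrt_eq_zero {r c d : ℝ} (hc : 0 < c) (hd : 0 ≤ d) :
    r * d - 1 / (2 * r * c) * (r * √(2 * c) * √d) ^ 2 = 0 := by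
  rw [mul_pow, mul_pow, Real.sq_sqrt hd, Real.sq_sqrt (by positivity)]
  field_simp
  ring

theorem stmt16_general (v b : ℝ → ℝ) (r c xbar : ℝ)
    (hr : 0 < r) (hc : 0 < c)
    (hC3 : ∃ δ > 0, ContDiffOn ℝ 3 v (Icc (xbar - δ) (xbar + δ)))
    (hvgt : v xbar > xbar)
    (h2 : deriv (deriv v) xbar = r * Real.sqrt (2*c) * Real.sqrt (v xbar - xbar))
    (hode : ∃ δ > 0, ∀ x ∈ Icc xbar (xbar + δ),
      r * (v x - x) = b x * deriv (deriv v) x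
        + (1/(2*r*c)) * (max (deriv (deriv v) x) 0)^2)
    (hbxbar : b xbar = 0)
    (hbblow : Tendsto (fun ε => (b (xbar + ε) - b xbar) / ε)
      (nhdsWithin 0 (Ioi 0)) atTop) :
    False := by
  obtain ⟨δ₁, hδ₁, hC3⟩ := hC3
  obtain ⟨δ₂, hδ₂, hode⟩ := hode
  have hgap : 0 < v xbar - xbar := sub_pos.2 hvgt
  have hv : ContDiffAt ℝ 3 v xbar := hC3.contDiffAt (Icc_mem_nhds (by linarith) (by linarith))
  have hv₂ : ContDiffAt ℝ 1 (deriv (deriv v)) xbar :=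
    (hv.derivWithin (m := 2) (by norm_num)).derivWithin (by norm_num)
  have hv₂pos : 0 < deriv (deriv v) xbar := by
    rw [h2]
    have := Real.sqrt_pos.2 hgap
    have := Real.sqrt_pos.2 (by positivity : 0 < 2 * c)
    positivity
  set g : ℝ → ℝ := fun x => r * (v x - x) - (1/(2*r*c)) * (deriv (deriv v) x)^2
  have hg : DifferentiableAt ℝ g xbar :=
    ((hv.differentiableAt (by norm_num)).sub differentiableAt_id).const_mul r |>.sub
      (((hv₂.differentiableAt one_ne_zero).pow 2).const_mul _)
  have hgxbar : g xbar = 0 := by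
    simpa only [g, h2] using mul_sub_one_div_mul_sq_mul_sqrt_eq_zero hc hgap.le
  have hbw : ∀ᶠ x in 𝓝[>] xbar, b x * deriv (deriv v) x = g x := by
    filter_upwards [Ioo_mem_nhdsGT (lt_add_of_pos_right xbar hδ₂),
      nhdsWithin_le_nhds (hv₂.continuousAt.eventually (eventually_gt_nhds hv₂pos))]
      with x hx hpos
    have := hode x (Ioo_subset_Icc_self hx)
    rw [max_eq_left hpos.le] at this
    simp only [g]
    linarith
  refine not_tendsto_atTop_of_tendsto_nhds
    (tendsto_div_of_mul_eq_of_hasDerivAt hg.hasDerivAt hgxbar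
      hv₂.continuousAt.continuousWithinAt hv₂pos.ne' hbw) ?_
  simpa [hbxbar] using hbblow

/-- Deterrence construction: if b vanishes at x̄ with infinite right
derivative and v is smooth near x̄ with v(x̄) > x̄ satisfying the HJB to the
right of x̄, a contradiction arises (hence v(x̄) ≤ x̄). -/
theorem stmt16 (v b : ℝ → ℝ) (r c xbar : ℝ)
    (hr : 0 < r) (hc : 0 < c) (hxbar : xbar ∈ Ioo (0:ℝ) 1)
    (hC3 : ∃ δ > 0, ContDiffOn ℝ 3 v (Icc (xbar - δ) (xbar + δ)))
    (hvgt : v xbar > xbar)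
    (h2 : deriv (deriv v) xbar = r * Real.sqrt (2*c) * Real.sqrt (v xbar - xbar))
    (hode : ∃ δ > 0, ∀ x ∈ Icc xbar (xbar + δ),
      r * (v x - x) = b x * deriv (deriv v) x
        + (1/(2*r*c)) * (max (deriv (deriv v) x) 0)^2)
    (hbcont : ContinuousOn b (Icc 0 1))
    (hbxbar : b xbar = 0)
    (hbdiff : ∀ x ∈ Ioc xbar 1, DifferentiableAt ℝ b x)
    (hbblow : Tendsto (fun ε => (b (xbar + ε) - b xbar) / ε)
      (nhdsWithin 0 (Ioi 0)) atTop) :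
    False :=
  stmt16_general v b r c xbar hr hc hC3 hvgt h2 hode hbxbar hbblow
end
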